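/- arXiv:0802.1465 — 2 statements merged into one kernel-verified Lean document; each statement's English description precedes it below -/
import Mathlib

section
/- In the ε-free case, the weight assigned by the 3-way composition rule—where a transition ((q1,q2,q3), a, c, w1⊗w2⊗w3, (q1',q2',q3')) is created from transitions (q1,a,b,w1,q1') in T1, (q2,b,b',w2,q2') in T2, and (q3,b',c,w3,q3') in T3—equals (T1 ∘ T2 ∘ T3)(x,y) for every pair of strings (x,y), over a commutative semiring. -/
/-! Expanding the product over time steps of the per-step sums over middle letters turns the
weight of a composed machine into a sum over intermediate strings; a path through a product of
state spaces is a pair of paths, so for each intermediate string the path sum factorises.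
Three-way composition is `T1 ∘ (T2 ∘ T3)`, so the two-way case applied twice gives the
theorem. -/

/-- Weight assigned by an ε-free weighted transducer (with state set `Q`,
initial weights `lam`, final weights `rho`, transition weights `E`) to a
pair of strings of length `n`, as a sum over accepting paths. -/
noncomputable def wtWeight {K σ Q : Type} [CommSemiring K] [Fintype σ] [Fintype Q]
    (lam rho : Q → K) (E : Q → σ → σ → Q → K) (n : ℕ) (x y : Fin n → σ) : K :=
  ∑ q : Fin (n + 1) → Q,
    lam (q 0) * (∏ i : Fin n, E (q i.castSucc) (x i) (y i) (q i.succ)) *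
      rho (q (Fin.last n))

theorem Fintype.sum_arrow_prod {α β γ M : Type} [Fintype α] [DecidableEq α] [Fintype β]
    [Fintype γ] [AddCommMonoid M] (f : (α → β × γ) → M) :
    ∑ q, f q = ∑ q₁ : α → β, ∑ q₂ : α → γ, f fun i => (q₁ i, q₂ i) := by
  rw [← (Equiv.arrowProdEquivProdArrow α (fun _ => β) (fun _ => γ)).symm.sum_comp,
    Fintype.sum_prod_type]
  rfl

theorem wtWeight_comp {K σ Q1 Q2 : Type} [CommSemiring K] [Fintype σ] [Fintype Q1] [Fintype Q2]
    (lam1 rho1 : Q1 → K) (E1 : Q1 → σ → σ → Q1 → K)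
    (lam2 rho2 : Q2 → K) (E2 : Q2 → σ → σ → Q2 → K) (n : ℕ) (x y : Fin n → σ) :
    wtWeight (fun q : Q1 × Q2 => lam1 q.1 * lam2 q.2) (fun q => rho1 q.1 * rho2 q.2)
      (fun q a c q' => ∑ b : σ, E1 q.1 a b q'.1 * E2 q.2 b c q'.2) n x y
    = ∑ z : Fin n → σ, wtWeight lam1 rho1 E1 n x z * wtWeight lam2 rho2 E2 n z y := by
  have path_sum_factor : ∀ z : Fin n → σ,
      ∑ q : Fin (n + 1) → Q1 × Q2, lam1 (q 0).1 * lam2 (q 0).2 *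
          (∏ i : Fin n, E1 (q i.castSucc).1 (x i) (z i) (q i.succ).1 *
            E2 (q i.castSucc).2 (z i) (y i) (q i.succ).2) *
          (rho1 (q (Fin.last n)).1 * rho2 (q (Fin.last n)).2)
        = wtWeight lam1 rho1 E1 n x z * wtWeight lam2 rho2 E2 n z y := by
    intro z
    simp only [wtWeight, Fintype.sum_mul_sum, Fintype.sum_arrow_prod, Finset.prod_mul_distrib]
    refine Fintype.sum_congr _ _ fun q₁ => Fintype.sum_congr _ _ fun q₂ => ?_
    ring
  conv_lhs =>
    simp only [wtWeight, Fintype.prod_sum, Finset.mul_sum, Finset.sum_mul]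
    rw [Finset.sum_comm]
  exact Fintype.sum_congr _ _ path_sum_factor

/-- The 3-way composition machine (states `Q1 × Q2 × Q3`, transitions obtained
by matching `(q1,a,b,w1,q1')`, `(q2,b,b',w2,q2')`, `(q3,b',c,w3,q3')` into a
transition of weight `w1 ⊗ w2 ⊗ w3`) computes exactly
`(T1 ∘ T2 ∘ T3)(x,y) = ⊕_{z,z'} T1(x,z) ⊗ T2(z,z') ⊗ T3(z',y)`. -/
theorem threeWay_correct {K σ Q1 Q2 Q3 : Type} [CommSemiring K] [Fintype σ]
    [Fintype Q1] [Fintype Q2] [Fintype Q3]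
    (lam1 rho1 : Q1 → K) (E1 : Q1 → σ → σ → Q1 → K)
    (lam2 rho2 : Q2 → K) (E2 : Q2 → σ → σ → Q2 → K)
    (lam3 rho3 : Q3 → K) (E3 : Q3 → σ → σ → Q3 → K)
    (n : ℕ) (x y : Fin n → σ) :
    wtWeight (fun q : Q1 × Q2 × Q3 => lam1 q.1 * lam2 q.2.1 * lam3 q.2.2)
      (fun q => rho1 q.1 * rho2 q.2.1 * rho3 q.2.2)
      (fun q a c q' => ∑ b : σ, ∑ b' : σ,
        E1 q.1 a b q'.1 * E2 q.2.1 b b' q'.2.1 * E3 q.2.2 b' c q'.2.2)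
      n x y
    = ∑ z : Fin n → σ, ∑ z' : Fin n → σ,
        wtWeight lam1 rho1 E1 n x z * wtWeight lam2 rho2 E2 n z z' *
          wtWeight lam3 rho3 E3 n z' y := by
  have outer_comp := wtWeight_comp lam1 rho1 E1 (fun q : Q2 × Q3 => lam2 q.1 * lam3 q.2)
    (fun q => rho2 q.1 * rho3 q.2)
    (fun q b c q' => ∑ b' : σ, E2 q.1 b b' q'.1 * E3 q.2 b' c q'.2) n x y
  simp only [mul_assoc, Finset.mul_sum] at outer_comp ⊢
  rw [outer_comp]
  simp only [wtWeight_comp, Finset.mul_sum]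
end

section
/- Let moves on the 3-dimensional grid be given by the letters of 𝔐 ∪ 𝔛 (coordinate 0 = stay, 1 or x = advance by one). For any two grid points P ⪯ Q in ℕ^3 there exists at least one sequence over 𝔐 avoiding the forbidden patterns of the filter W that moves from P to Q, provided the coordinates advance only by ε-moves; explicitly, with increments (n1,n2,n3) sorted so nσ(1) ≤ nσ(2) ≤ nσ(3), the sequence taking all-three diagonal moves first, then two-coordinate moves, then single-coordinate moves, is such a sequence. -/
/-- A move on the 3-dimensional grid: a triplet in {0,1}³ (true = 1). -/
abbrev Mv := Bool × Bool × Bool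

def cnt (b : Bool) : ℕ := if b then 1 else 0

/-- Componentwise sum of a sequence of moves. -/
def msum (l : List Mv) : ℕ × ℕ × ℕ :=
  ((l.map fun m => cnt m.1).sum,
   (l.map fun m => cnt m.2.1).sum,
   (l.map fun m => cnt m.2.2).sum)

/-- All moves belong to 𝔐 = {0,1}³ \ {(0,0,0)}. -/
def NoZero (l : List Mv) : Prop := ∀ m ∈ l, m ≠ ((false, false, false) : Mv)

/-- The rule: in consecutive triplets, a 0 in coordinate i in the first cannot
be followed by a 1 in coordinate i in the second (1-moves taken as early as
possible). -/
def Mono (l : List Mv) : Prop :=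
  l.Chain' fun m m' =>
    (m.1 = false → m'.1 = false) ∧ (m.2.1 = false → m'.2.1 = false) ∧
    (m.2.2 = false → m'.2.2 = false)

/-- The canonical sequence `(1,1,1)^{n1} (0,1,1)^{n2-n1} (0,0,1)^{n3-n2}`. -/
def canon3 (n1 n2 n3 : ℕ) : List Mv :=
  List.replicate n1 (true, true, true) ++
    List.replicate (n2 - n1) (false, true, true) ++
    List.replicate (n3 - n2) (false, false, true)

/-! Let step `k` of the path advance coordinate `i` exactly when `k < nᵢ`, for `k < max nᵢ`.
Coordinate `i` then advances `nᵢ` times, some coordinate advances at every step, and a coordinate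
that stays at step `k` stays at every later step. When `n1 ≤ n2 ≤ n3` this threshold path is
literally the canonical sequence. -/

def thresholdPath (n1 n2 n3 : ℕ) : List Mv :=
  (List.range (max n1 (max n2 n3))).map fun k => (decide (k < n1), decide (k < n2), decide (k < n3))

lemma sum_map_cnt_range_lt (N n : ℕ) :
    ((List.range N).map fun k => cnt (decide (k < n))).sum = min N n := by
  induction N with
  | zero => simp
  | succ N ih =>
    rw [List.range_succ, List.map_append, List.sum_append, ih]
    by_cases h : N < n <;> simp [cnt, h] <;> omega

lemma msum_thresholdPath (n1 n2 n3 : ℕ) : msum (thresholdPath n1 n2 n3) = (n1, n2, n3) := by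
  simp only [msum, thresholdPath, List.map_map, Function.comp_def, sum_map_cnt_range_lt,
    Prod.mk.injEq]
  omega

lemma noZero_thresholdPath (n1 n2 n3 : ℕ) : NoZero (thresholdPath n1 n2 n3) := by
  simp only [NoZero, thresholdPath, List.mem_map, List.mem_range]
  rintro _ ⟨k, hk, rfl⟩
  simp only [ne_eq, Prod.mk.injEq, decide_eq_false_iff_not, not_and, not_not]
  omega

lemma mono_thresholdPath (n1 n2 n3 : ℕ) : Mono (thresholdPath n1 n2 n3) := by
  refine List.isChain_map _ |>.2 <| (List.isChain_range _ _).2 fun k _ => ?_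
  simp only [decide_eq_false_iff_not, not_lt]
  omega

lemma thresholdPath_spec (n1 n2 n3 : ℕ) :
    NoZero (thresholdPath n1 n2 n3) ∧ Mono (thresholdPath n1 n2 n3) ∧
      msum (thresholdPath n1 n2 n3) = (n1, n2, n3) :=
  ⟨noZero_thresholdPath _ _ _, mono_thresholdPath _ _ _, msum_thresholdPath _ _ _⟩

lemma canon3_eq_thresholdPath {n1 n2 n3 : ℕ} (h12 : n1 ≤ n2) (h23 : n2 ≤ n3) :
    canon3 n1 n2 n3 = thresholdPath n1 n2 n3 := by
  refine List.ext_getElem (by simp [canon3, thresholdPath]; omega) fun k hk _ => ?_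
  simp only [canon3, List.length_append, List.length_replicate] at hk
  simp only [canon3, thresholdPath, List.getElem_append, List.getElem_replicate, List.getElem_map,
    List.getElem_range, List.length_append, List.length_replicate]
  split_ifs <;> simp <;> omega

theorem exists_allowed_eps_path_general (P Q : ℕ × ℕ × ℕ) :
    (∃ l : List Mv, NoZero l ∧ Mono l ∧
      msum l = (Q.1 - P.1, Q.2.1 - P.2.1, Q.2.2 - P.2.2)) ∧
    (Q.1 - P.1 ≤ Q.2.1 - P.2.1 → Q.2.1 - P.2.1 ≤ Q.2.2 - P.2.2 →
      NoZero (canon3 (Q.1 - P.1) (Q.2.1 - P.2.1) (Q.2.2 - P.2.2)) ∧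
      Mono (canon3 (Q.1 - P.1) (Q.2.1 - P.2.1) (Q.2.2 - P.2.2)) ∧
      msum (canon3 (Q.1 - P.1) (Q.2.1 - P.2.1) (Q.2.2 - P.2.2)) =
        (Q.1 - P.1, Q.2.1 - P.2.1, Q.2.2 - P.2.2)) := by
  refine ⟨⟨_, thresholdPath_spec _ _ _⟩, fun h12 h23 => ?_⟩
  rw [canon3_eq_thresholdPath h12 h23]
  exact thresholdPath_spec _ _ _

/-- For any two grid points `P ⪯ Q` in ℕ³ (increments `(n1,n2,n3)`), there is a
sequence over 𝔐 = {0,1}³ \ {(0,0,0)} avoiding the forbidden patterns of the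
filter W (coordinate-wise 0-then-1 in consecutive triplets, and the triplet
(0,0,0)) that moves from P to Q; when `n1 ≤ n2 ≤ n3`, the sequence taking
all-three diagonal moves first, then two-coordinate moves, then one-coordinate
moves is such a sequence. -/
theorem exists_allowed_eps_path (P Q : ℕ × ℕ × ℕ)
    (h1 : P.1 ≤ Q.1) (h2 : P.2.1 ≤ Q.2.1) (h3 : P.2.2 ≤ Q.2.2) :
    (∃ l : List Mv, NoZero l ∧ Mono l ∧
      msum l = (Q.1 - P.1, Q.2.1 - P.2.1, Q.2.2 - P.2.2)) ∧
    (Q.1 - P.1 ≤ Q.2.1 - P.2.1 → Q.2.1 - P.2.1 ≤ Q.2.2 - P.2.2 →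
      NoZero (canon3 (Q.1 - P.1) (Q.2.1 - P.2.1) (Q.2.2 - P.2.2)) ∧
      Mono (canon3 (Q.1 - P.1) (Q.2.1 - P.2.1) (Q.2.2 - P.2.2)) ∧
      msum (canon3 (Q.1 - P.1) (Q.2.1 - P.2.1) (Q.2.2 - P.2.2)) =
        (Q.1 - P.1, Q.2.1 - P.2.1, Q.2.2 - P.2.2)) :=
  exists_allowed_eps_path_general P Q
end
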